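/- arXiv:2510.27550 — 4 statements merged into one kernel-verified Lean document; each statement's English description precedes it below -/
import Mathlib

section
/- Let X be a locally compact Hausdorff topological space and let μ and ν be two complex Radon measures on X (complex Borel measures of finite total variation whose total variation measures are outer regular). If μ and ν are mutually alien (mutually singular), i.e. there is a Borel set M ⊆ X with |μ|(X \ M) = 0 and |ν|(M) = 0, then μ and ν are orthogonal: for every ε > 0 there exist open sets U, V ⊆ X with U ∪ V = X such that every continuous compactly supported function φ : X → ℂ with supp φ ⊆ U satisfies |∫ φ dμ| ≤ ε‖φ‖_∞, and every continuous compactly supported φ with supp φ ⊆ V satisfies |∫ φ dν| ≤ ε‖φ‖_∞. -/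
open MeasureTheory Filter Topology

/-- Integration of a (bounded continuous) function against a complex measure,
via the Jordan decompositions of its real and imaginary parts. -/
noncomputable def cmIntegral {X : Type*} [MeasurableSpace X]
    (μ : MeasureTheory.ComplexMeasure X) (φ : X → ℂ) : ℂ :=
  ((∫ x, φ x ∂(MeasureTheory.ComplexMeasure.re μ).toJordanDecomposition.posPart) -
      ∫ x, φ x ∂(MeasureTheory.ComplexMeasure.re μ).toJordanDecomposition.negPart) +
    Complex.I *
      ((∫ x, φ x ∂(MeasureTheory.ComplexMeasure.im μ).toJordanDecomposition.posPart) -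
        ∫ x, φ x ∂(MeasureTheory.ComplexMeasure.im μ).toJordanDecomposition.negPart)

/-- The total variation measure of a complex measure (up to a bounded factor:
the sum of the total variations of real and imaginary parts; it has the same
null sets as the usual total variation). -/
noncomputable def cmVariation {X : Type*} [MeasurableSpace X]
    (μ : MeasureTheory.ComplexMeasure X) : MeasureTheory.Measure X :=
  (MeasureTheory.ComplexMeasure.re μ).totalVariation +
    (MeasureTheory.ComplexMeasure.im μ).totalVariation

/-!
If `M` carries `μ` and `Mᶜ` carries `ν`, outer regularity gives open sets `U ⊇ Mᶜ` and `V ⊇ M`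
of variation less than `ε` for `μ` and `ν` respectively; they cover `X`, and a function supported
in `U` integrates against `μ` to at most `‖φ‖_∞ · |μ|(U) ≤ ε ‖φ‖_∞`.
-/

section

variable {X E : Type*} [MeasurableSpace X] [NormedAddCommGroup E] [NormedSpace ℝ E]
  {s : Set X} {C : ℝ}

theorem norm_integral_le_of_support_subset {m : Measure X} {f : X → E} (hms : m s < ⊤)
    (hf : Function.support f ⊆ s) (hC : ∀ x ∈ s, ‖f x‖ ≤ C) : ‖∫ x, f x ∂m‖ ≤ C * m.real s := by
  rw [← setIntegral_eq_integral_of_forall_compl_eq_zero fun x hx ↦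
    Function.notMem_support.1 fun h ↦ hx (hf h)]
  exact norm_setIntegral_le_of_norm_le_const hms hC

theorem SignedMeasure.norm_integral_posPart_sub_negPart_le (σ : SignedMeasure X) {f : X → E}
    (hf : Function.support f ⊆ s) (hC : ∀ x ∈ s, ‖f x‖ ≤ C) :
    ‖(∫ x, f x ∂σ.toJordanDecomposition.posPart) - ∫ x, f x ∂σ.toJordanDecomposition.negPart‖
      ≤ C * σ.totalVariation.real s :=
  calc _ ≤ ‖∫ x, f x ∂σ.toJordanDecomposition.posPart‖
        + ‖∫ x, f x ∂σ.toJordanDecomposition.negPart‖ := norm_sub_le _ _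
    _ ≤ C * σ.toJordanDecomposition.posPart.real s
        + C * σ.toJordanDecomposition.negPart.real s := by
      gcongr <;> exact norm_integral_le_of_support_subset (measure_lt_top _ _) hf hC
    _ = C * σ.totalVariation.real s := by
      rw [SignedMeasure.totalVariation, measureReal_add_apply, mul_add]

theorem norm_cmIntegral_le (μ : ComplexMeasure X) {φ : X → ℂ}
    (hφ : Function.support φ ⊆ s) (hC : ∀ x ∈ s, ‖φ x‖ ≤ C) :
    ‖cmIntegral μ φ‖ ≤ C * (cmVariation μ).real s :=
  calc ‖cmIntegral μ φ‖ ≤ C * (ComplexMeasure.re μ).totalVariation.real s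
        + C * (ComplexMeasure.im μ).totalVariation.real s := by
        refine (norm_add_le _ _).trans ?_
        rw [norm_mul, Complex.norm_I, one_mul]
        exact add_le_add (SignedMeasure.norm_integral_posPart_sub_negPart_le _ hφ hC)
          (SignedMeasure.norm_integral_posPart_sub_negPart_le _ hφ hC)
    _ = C * (cmVariation μ).real s := by
      rw [cmVariation, measureReal_add_apply, mul_add]

theorem exists_isOpen_superset_norm_cmIntegral_le [TopologicalSpace X] (μ : ComplexMeasure X)
    [(cmVariation μ).OuterRegular] (hs : cmVariation μ s = 0) {ε : ℝ} (hε : 0 < ε) :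
    ∃ U, s ⊆ U ∧ IsOpen U ∧ ∀ φ : X → ℂ, Continuous φ → HasCompactSupport φ →
      tsupport φ ⊆ U → ‖cmIntegral μ φ‖ ≤ ε * ⨆ x, ‖φ x‖ := by
  obtain ⟨U, hsU, hU, hUε⟩ := s.exists_isOpen_lt_of_lt (ENNReal.ofReal ε)
    (by rwa [hs, ENNReal.ofReal_pos])
  refine ⟨U, hsU, hU, fun φ hφ hφc hφU ↦ ?_⟩
  have hle_sup : ∀ x, ‖φ x‖ ≤ ⨆ x, ‖φ x‖ :=
    le_ciSup (hφ.norm.bddAbove_range_of_hasCompactSupport hφc.norm)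
  calc ‖cmIntegral μ φ‖ ≤ (⨆ x, ‖φ x‖) * (cmVariation μ).real U :=
        norm_cmIntegral_le μ ((subset_tsupport φ).trans hφU) fun x _ ↦ hle_sup x
    _ ≤ (⨆ x, ‖φ x‖) * ε := by
      gcongr
      · exact Real.iSup_nonneg fun x ↦ norm_nonneg _
      · exact ENNReal.toReal_le_of_le_ofReal hε.le hUε.le
    _ = ε * ⨆ x, ‖φ x‖ := mul_comm _ _

end

theorem alien_imp_orthogonal_general {X : Type*} [TopologicalSpace X] [MeasurableSpace X]
    (μ ν : MeasureTheory.ComplexMeasure X)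
    (hμreg : (cmVariation μ).OuterRegular) (hνreg : (cmVariation ν).OuterRegular)
    (halien : ∃ M : Set X, MeasurableSet M ∧ cmVariation μ Mᶜ = 0 ∧ cmVariation ν M = 0) :
    ∀ ε : ℝ, 0 < ε → ∃ U V : Set X, IsOpen U ∧ IsOpen V ∧ U ∪ V = Set.univ ∧
      (∀ φ : X → ℂ, Continuous φ → HasCompactSupport φ → tsupport φ ⊆ U →
        ‖cmIntegral μ φ‖ ≤ ε * ⨆ x, ‖φ x‖) ∧
      (∀ φ : X → ℂ, Continuous φ → HasCompactSupport φ → tsupport φ ⊆ V →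
        ‖cmIntegral ν φ‖ ≤ ε * ⨆ x, ‖φ x‖) := by
  intro ε hε
  obtain ⟨M, -, hμM, hνM⟩ := halien
  obtain ⟨U, hMU, hU, hμU⟩ := exists_isOpen_superset_norm_cmIntegral_le μ hμM hε
  obtain ⟨V, hMV, hV, hνV⟩ := exists_isOpen_superset_norm_cmIntegral_le ν hνM hε
  have hcover : U ∪ V = Set.univ :=
    Set.eq_univ_of_forall fun x ↦ (em (x ∈ M)).elim (fun h ↦ .inr (hMV h)) fun h ↦ .inl (hMU h)
  exact ⟨U, V, hU, hV, hcover, hμU, hνV⟩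

/-- mutually alien (singular) complex Radon measures are orthogonal. -/
theorem alien_imp_orthogonal {X : Type*} [TopologicalSpace X] [LocallyCompactSpace X]
    [T2Space X] [MeasurableSpace X] [BorelSpace X]
    (μ ν : MeasureTheory.ComplexMeasure X)
    (hμreg : (cmVariation μ).OuterRegular) (hνreg : (cmVariation ν).OuterRegular)
    (halien : ∃ M : Set X, MeasurableSet M ∧ cmVariation μ Mᶜ = 0 ∧ cmVariation ν M = 0) :
    ∀ ε : ℝ, 0 < ε → ∃ U V : Set X, IsOpen U ∧ IsOpen V ∧ U ∪ V = Set.univ ∧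
      (∀ φ : X → ℂ, Continuous φ → HasCompactSupport φ → tsupport φ ⊆ U →
        ‖cmIntegral μ φ‖ ≤ ε * ⨆ x, ‖φ x‖) ∧
      (∀ φ : X → ℂ, Continuous φ → HasCompactSupport φ → tsupport φ ⊆ V →
        ‖cmIntegral ν φ‖ ≤ ε * ⨆ x, ‖φ x‖) :=
  alien_imp_orthogonal_general μ ν hμreg hνreg halien
end

section
/- Let X be a locally compact Hausdorff topological space and let μ and ν be two complex Radon measures on X (complex Borel measures of finite total variation, with |μ| and |ν| inner regular with respect to compact sets and outer regular). If μ and ν are orthogonal — i.e. for every ε > 0 there exist open sets U, V ⊆ X with U ∪ V = X such that |∫ φ dμ| ≤ ε‖φ‖_∞ for every φ ∈ C_c(X) with supp φ ⊆ U and |∫ φ dν| ≤ ε‖φ‖_∞ for every φ ∈ C_c(X) with supp φ ⊆ V — then μ and ν are mutually alien: there exist disjoint Borel sets R, S ⊆ X with |μ|(X \ R) = 0 and |ν|(X \ S) = 0. -/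
open MeasureTheory Filter Topology

/-!
Fix `ε > 0` and the cover `U ∪ V` given by orthogonality. Testing `μ` against Urysohn
functions that approximate the indicator of a compact `K ⊆ U` from outside gives
`‖μ K‖ ≤ ε`, by outer regularity; inner regularity extends this to all Borel subsets of `U`,
and the Hahn decompositions of `Re μ` and `Im μ` turn it into `|μ|(U) ≤ 4ε`. With `ε = 2⁻ⁿ`,
Borel–Cantelli makes `limsup Uₙ` a `|μ|`-null set and `limsup Vₙ` a `|ν|`-null set, and since
`Uₙ ∪ Vₙ = X` every point lies in one of them: their complements are `R` and `S`.
-/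

namespace MeasureTheory.SignedMeasure

variable {X : Type*} [MeasurableSpace X]

theorem abs_apply_le_totalVariation_real (s : SignedMeasure X) (E : Set X) :
    |s E| ≤ s.totalVariation.real E := by
  by_cases hE : MeasurableSet E
  · rw [s.apply_eq_posPart_real_sub_negPart_real hE, totalVariation, measureReal_add_apply]
    exact (abs_sub _ _).trans (by simp only [abs_of_nonneg measureReal_nonneg, le_refl])
  · rw [s.not_measurable hE, abs_zero]
    exact measureReal_nonneg

theorem posPart_le_of_forall_le (s : SignedMeasure X) {E : Set X} (hE : MeasurableSet E)
    {c : ℝ} (h : ∀ F ⊆ E, MeasurableSet F → s F ≤ c) :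
    s.toJordanDecomposition.posPart E ≤ ENNReal.ofReal c := by
  -- `E \ T` is the part of `E` on which `s` coincides with its positive part.
  obtain ⟨T, hT, hposT, hnegT⟩ := s.toJordanDecomposition.mutuallySingular
  have hneg : s.toJordanDecomposition.negPart (E \ T) = 0 :=
    measure_mono_null (fun x hx => hx.2) hnegT
  have hs : s (E \ T) = s.toJordanDecomposition.posPart.real (E \ T) := by
    simp [s.apply_eq_posPart_real_sub_negPart_real (hE.diff hT), Measure.real, hneg]
  rw [← measure_sdiff_null hposT, ← ofReal_measureReal, ← hs]
  exact ENNReal.ofReal_le_ofReal (h _ Set.sdiff_subset (hE.diff hT))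

theorem negPart_le_of_forall_le (s : SignedMeasure X) {E : Set X} (hE : MeasurableSet E)
    {c : ℝ} (h : ∀ F ⊆ E, MeasurableSet F → -s F ≤ c) :
    s.toJordanDecomposition.negPart E ≤ ENNReal.ofReal c := by
  simpa [toJordanDecomposition_neg, JordanDecomposition.neg_posPart] using
    (-s).posPart_le_of_forall_le hE h

theorem totalVariation_le_of_forall_abs_le (s : SignedMeasure X) {E : Set X}
    (hE : MeasurableSet E) {c : ℝ} (h : ∀ F ⊆ E, MeasurableSet F → |s F| ≤ c) :
    s.totalVariation E ≤ 2 * ENNReal.ofReal c := by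
  rw [totalVariation, Measure.add_apply, two_mul]
  exact add_le_add (s.posPart_le_of_forall_le hE fun F hFE hF => (le_abs_self _).trans (h F hFE hF))
    (s.negPart_le_of_forall_le hE fun F hFE hF => (neg_le_abs _).trans (h F hFE hF))

theorem norm_integral_posPart_sub_integral_negPart_le (s : SignedMeasure X) {f : X → ℂ}
    (hf : Integrable f s.totalVariation) :
    ‖(∫ x, f x ∂s.toJordanDecomposition.posPart) -
        ∫ x, f x ∂s.toJordanDecomposition.negPart‖ ≤ ∫ x, ‖f x‖ ∂s.totalVariation := by
  obtain ⟨hpos, hneg⟩ := integrable_add_measure.1 hf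
  calc _ ≤ ‖∫ x, f x ∂s.toJordanDecomposition.posPart‖
        + ‖∫ x, f x ∂s.toJordanDecomposition.negPart‖ := norm_sub_le _ _
    _ ≤ (∫ x, ‖f x‖ ∂s.toJordanDecomposition.posPart)
        + ∫ x, ‖f x‖ ∂s.toJordanDecomposition.negPart :=
      add_le_add (norm_integral_le_integral_norm _) (norm_integral_le_integral_norm _)
    _ = ∫ x, ‖f x‖ ∂s.totalVariation := (integral_add_measure hpos.norm hneg.norm).symm

end MeasureTheory.SignedMeasure

namespace MeasureTheory.ComplexMeasure

variable {X : Type*} [MeasurableSpace X]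

instance (μ : ComplexMeasure X) : IsFiniteMeasure (cmVariation μ) := by
  unfold cmVariation
  infer_instance

theorem norm_apply_le_cmVariation_real (μ : ComplexMeasure X) (E : Set X) :
    ‖μ E‖ ≤ (cmVariation μ).real E := by
  rw [cmVariation, measureReal_add_apply]
  exact (Complex.norm_le_abs_re_add_abs_im _).trans
    (add_le_add ((re μ).abs_apply_le_totalVariation_real E)
      ((im μ).abs_apply_le_totalVariation_real E))

theorem cmVariation_le_of_forall_norm_le (μ : ComplexMeasure X) {E : Set X}
    (hE : MeasurableSet E) {c : ℝ} (h : ∀ F ⊆ E, MeasurableSet F → ‖μ F‖ ≤ c) :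
    cmVariation μ E ≤ 4 * ENNReal.ofReal c := by
  have hre := (re μ).totalVariation_le_of_forall_abs_le hE fun F hFE hF =>
    (Complex.abs_re_le_norm _).trans (h F hFE hF)
  have him := (im μ).totalVariation_le_of_forall_abs_le hE fun F hFE hF =>
    (Complex.abs_im_le_norm _).trans (h F hFE hF)
  calc cmVariation μ E ≤ 2 * ENNReal.ofReal c + 2 * ENNReal.ofReal c := add_le_add hre him
    _ = 4 * ENNReal.ofReal c := by ring

theorem norm_cmIntegral_le (μ : ComplexMeasure X) {f : X → ℂ}
    (hf : Integrable f (cmVariation μ)) :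
    ‖cmIntegral μ f‖ ≤ ∫ x, ‖f x‖ ∂cmVariation μ := by
  obtain ⟨hre, him⟩ := integrable_add_measure.1 hf
  rw [cmVariation, integral_add_measure hre.norm him.norm]
  refine (norm_add_le _ _).trans (add_le_add ?_ ?_)
  · exact (re μ).norm_integral_posPart_sub_integral_negPart_le hre
  · rw [norm_mul, Complex.norm_I, one_mul]
    exact (im μ).norm_integral_posPart_sub_integral_negPart_le him

theorem cmIntegral_sub (μ : ComplexMeasure X) {f g : X → ℂ}
    (hf : Integrable f (cmVariation μ)) (hg : Integrable g (cmVariation μ)) :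
    cmIntegral μ (f - g) = cmIntegral μ f - cmIntegral μ g := by
  simp only [cmVariation, SignedMeasure.totalVariation, integrable_add_measure] at hf hg
  simp only [cmIntegral, Pi.sub_apply, integral_sub hf.1.1 hg.1.1, integral_sub hf.1.2 hg.1.2,
    integral_sub hf.2.1 hg.2.1, integral_sub hf.2.2 hg.2.2]
  ring

theorem cmIntegral_indicator_one (μ : ComplexMeasure X) {K : Set X} (hK : MeasurableSet K) :
    cmIntegral μ (K.indicator 1) = μ K := by
  have hre : (μ K).re = _ := (re μ).apply_eq_posPart_real_sub_negPart_real hK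
  have him : (μ K).im = _ := (im μ).apply_eq_posPart_real_sub_negPart_real hK
  simp only [cmIntegral, Pi.one_def, integral_indicator_const _ hK]
  apply Complex.ext <;> simp [hre, him]

theorem norm_cmIntegral_sub_apply_le (μ : ComplexMeasure X) {g : X → ℂ}
    (hg : Integrable g (cmVariation μ)) {K O : Set X} (hK : MeasurableSet K)
    (hO : MeasurableSet O) (hg_le : ∀ x, ‖g x‖ ≤ 1) (hgK : ∀ x ∈ K, g x = 1)
    (hgO : ∀ x ∉ O, g x = 0) :
    ‖cmIntegral μ g - μ K‖ ≤ (cmVariation μ).real (O \ K) := by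
  have hK_int : Integrable (K.indicator (1 : X → ℂ)) (cmVariation μ) :=
    (integrable_const 1).indicator hK
  have hpointwise :
      ∀ x, ‖(g - K.indicator (1 : X → ℂ)) x‖ ≤ (O \ K).indicator (1 : X → ℝ) x := by
    intro x
    by_cases hxK : x ∈ K
    · simp [hxK, hgK x hxK]
    by_cases hxO : x ∈ O
    · simpa [hxK, hxO] using hg_le x
    · simp [hxK, hxO, hgO x hxO]
  rw [← μ.cmIntegral_indicator_one hK, ← μ.cmIntegral_sub hg hK_int,
    ← integral_indicator_one (hO.diff hK)]
  exact (μ.norm_cmIntegral_le (hg.sub hK_int)).trans <| integral_mono (hg.sub hK_int).norm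
    ((integrable_const 1).indicator (hO.diff hK)) hpointwise

/-- The functional `φ ↦ ∫ φ dμ` on `C_c(U)` has norm at most `ε`. -/
def NormLEOn [TopologicalSpace X] (μ : ComplexMeasure X) (U : Set X) (ε : ℝ) : Prop :=
  ∀ φ : X → ℂ, Continuous φ → HasCompactSupport φ → tsupport φ ⊆ U →
    ‖cmIntegral μ φ‖ ≤ ε * ⨆ x, ‖φ x‖

variable [TopologicalSpace X] [OpensMeasurableSpace X] [T2Space X] [LocallyCompactSpace X]
  {μ : ComplexMeasure X} {U : Set X} {ε : ℝ}

theorem NormLEOn.norm_apply_le_of_isCompact [(cmVariation μ).OuterRegular]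
    (hμ : μ.NormLEOn U ε) (hU : IsOpen U) (hε : 0 ≤ ε) {K : Set X} (hK : IsCompact K)
    (hKU : K ⊆ U) : ‖μ K‖ ≤ ε := by
  refine le_of_forall_pos_le_add fun δ hδ => ?_
  obtain ⟨O, hKO, hO, -, hOK⟩ := hK.measurableSet.exists_isOpen_sdiff_lt
    (measure_ne_top (cmVariation μ) K) (ENNReal.ofReal_pos.2 hδ).ne'
  obtain ⟨f, hfK, hf_cpt, hfOU, hf01⟩ := exists_continuousMap_one_of_isCompact_subset_isOpen hK
    (hO.inter hU) (Set.subset_inter hKO hKU)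
  set φ : X → ℂ := fun x => (f x : ℂ)
  have hφ_le : ∀ x, ‖φ x‖ ≤ 1 := fun x => by
    simpa [φ, abs_of_nonneg (hf01 x).1] using (hf01 x).2
  have hφ_supp : tsupport φ ⊆ O ∩ U := (tsupport_comp_subset Complex.ofReal_zero f).trans hfOU
  have hφ_cpt : HasCompactSupport φ := HasCompactSupport.comp_left hf_cpt Complex.ofReal_zero
  have hφ_cont : Continuous φ := by fun_prop
  have hφ_norm : ‖cmIntegral μ φ‖ ≤ ε :=
    (hμ φ hφ_cont hφ_cpt (hφ_supp.trans Set.inter_subset_right)).trans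
      (mul_le_of_le_one_right hε (Real.iSup_le hφ_le zero_le_one))
  have hφ_K : ‖cmIntegral μ φ - μ K‖ ≤ δ := by
    refine (μ.norm_cmIntegral_sub_apply_le (hφ_cont.integrable_of_hasCompactSupport hφ_cpt)
      hK.measurableSet hO.measurableSet hφ_le (fun x hx => by simp [φ, hfK hx])
      fun x hx => ?_).trans (ENNReal.toReal_le_of_le_ofReal hδ.le hOK.le)
    exact image_eq_zero_of_notMem_tsupport fun h => hx (hφ_supp h).1
  calc ‖μ K‖ ≤ ‖cmIntegral μ φ‖ + ‖cmIntegral μ φ - μ K‖ :=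
        norm_le_norm_add_norm_sub _ _
    _ ≤ ε + δ := add_le_add hφ_norm hφ_K

variable [(cmVariation μ).OuterRegular] [(cmVariation μ).InnerRegular]

theorem NormLEOn.norm_apply_le (hμ : μ.NormLEOn U ε) (hU : IsOpen U) (hε : 0 ≤ ε) {E : Set X}
    (hE : MeasurableSet E) (hEU : E ⊆ U) : ‖μ E‖ ≤ ε := by
  refine le_of_forall_pos_le_add fun δ hδ => ?_
  obtain ⟨K, hKE, hK, hEK⟩ := hE.exists_isCompact_sdiff_lt (measure_ne_top (cmVariation μ) E)
    (ENNReal.ofReal_pos.2 hδ).ne'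
  rw [← VectorMeasure.of_add_of_sdiff hK.measurableSet hE hKE]
  calc ‖μ K + μ (E \ K)‖ ≤ ‖μ K‖ + ‖μ (E \ K)‖ := norm_add_le _ _
    _ ≤ ε + δ := add_le_add (hμ.norm_apply_le_of_isCompact hU hε hK (hKE.trans hEU))
      ((μ.norm_apply_le_cmVariation_real _).trans (ENNReal.toReal_le_of_le_ofReal hδ.le hEK.le))

theorem NormLEOn.cmVariation_le (hμ : μ.NormLEOn U ε) (hU : IsOpen U) (hε : 0 ≤ ε) :
    cmVariation μ U ≤ 4 * ENNReal.ofReal ε :=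
  μ.cmVariation_le_of_forall_norm_le hU.measurableSet fun _ hFU hF =>
    hμ.norm_apply_le hU hε hF hFU

end MeasureTheory.ComplexMeasure

theorem MeasureTheory.measure_limsup_eq_zero_of_le_ofReal {X : Type*} [MeasurableSpace X]
    {ρ : Measure X} {W : ℕ → Set X} {a : ℕ → ℝ} (ha₀ : ∀ n, 0 ≤ a n)
    (ha : Summable a) (hW : ∀ n, ρ (W n) ≤ ENNReal.ofReal (a n)) :
    ρ (limsup W atTop) = 0 := by
  refine measure_limsup_atTop_eq_zero (ne_top_of_le_ne_top ?_ (ENNReal.tsum_le_tsum hW))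
  rw [← ENNReal.ofReal_tsum_of_nonneg ha₀ ha]
  exact ENNReal.ofReal_ne_top

theorem Set.disjoint_compl_limsup_of_union_eq_univ {X : Type*} {U V : ℕ → Set X}
    (hUV : ∀ n, U n ∪ V n = Set.univ) : Disjoint (limsup U atTop)ᶜ (limsup V atTop)ᶜ := by
  refine Set.disjoint_left.2 fun x hxU hxV => ?_
  rw [Set.mem_compl_iff, mem_limsup_iff_frequently_mem, not_frequently] at hxU hxV
  obtain ⟨n, hxUn, hxVn⟩ := (hxU.and hxV).exists
  exact (Set.mem_union x _ _).not.2 (not_or_intro hxUn hxVn) (hUV n ▸ Set.mem_univ x)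

/-- orthogonal complex Radon measures are mutually alien (singular). -/
theorem orthogonal_imp_alien {X : Type*} [TopologicalSpace X] [LocallyCompactSpace X]
    [T2Space X] [MeasurableSpace X] [BorelSpace X]
    (μ ν : MeasureTheory.ComplexMeasure X)
    (hμout : (cmVariation μ).OuterRegular) (hνout : (cmVariation ν).OuterRegular)
    (hμin : (cmVariation μ).InnerRegular) (hνin : (cmVariation ν).InnerRegular)
    (horth : ∀ ε : ℝ, 0 < ε → ∃ U V : Set X, IsOpen U ∧ IsOpen V ∧ U ∪ V = Set.univ ∧
      (∀ φ : X → ℂ, Continuous φ → HasCompactSupport φ → tsupport φ ⊆ U →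
        ‖cmIntegral μ φ‖ ≤ ε * ⨆ x, ‖φ x‖) ∧
      (∀ φ : X → ℂ, Continuous φ → HasCompactSupport φ → tsupport φ ⊆ V →
        ‖cmIntegral ν φ‖ ≤ ε * ⨆ x, ‖φ x‖)) :
    ∃ R S : Set X, MeasurableSet R ∧ MeasurableSet S ∧ Disjoint R S ∧
      cmVariation μ Rᶜ = 0 ∧ cmVariation ν Sᶜ = 0 := by
  choose U V hU hV hUV hμU hνV using fun n : ℕ => horth ((1 / 2) ^ n) (by positivity)
  have hε₀ : ∀ n, (0 : ℝ) ≤ 4 * (1 / 2) ^ n := fun n => by positivity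
  have hε : Summable fun n : ℕ => 4 * (1 / 2 : ℝ) ^ n := summable_geometric_two.mul_left 4
  have hμ_null : cmVariation μ (limsup U atTop) = 0 :=
    measure_limsup_eq_zero_of_le_ofReal hε₀ hε fun n => by
      simpa [ENNReal.ofReal_mul] using
        ComplexMeasure.NormLEOn.cmVariation_le (hμU n) (hU n) (by positivity)
  have hν_null : cmVariation ν (limsup V atTop) = 0 :=
    measure_limsup_eq_zero_of_le_ofReal hε₀ hε fun n => by
      simpa [ENNReal.ofReal_mul] using
        ComplexMeasure.NormLEOn.cmVariation_le (hνV n) (hV n) (by positivity)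
  refine ⟨(limsup U atTop)ᶜ, (limsup V atTop)ᶜ,
    (MeasurableSet.measurableSet_limsup fun n => (hU n).measurableSet).compl,
    (MeasurableSet.measurableSet_limsup fun n => (hV n).measurableSet).compl,
    Set.disjoint_compl_limsup_of_union_eq_univ hUV, by rwa [compl_compl], by rwa [compl_compl]⟩
end

section
/- Let Ω ⊆ ℝ^d be a nonempty open set, let σ : Ω × ℝ^d → ℂ be continuous and ℤ^d-periodic in its second variable (σ(x, y + k) = σ(x, y) for all k ∈ ℤ^d), let (ε_n) be a sequence of positive reals with ε_n → 0, and let q ∈ ℤ^d. Define the q-th Fourier coefficient in the second variable by σ̂(x, q) = ∫_{[0,1]^d} σ(x, y) e^{−2πi q·y} dy. Then for every φ ∈ C_c(Ω): ∫_Ω σ(x, x/ε_n) e^{−2πi q·x/ε_n} φ(x) dx → ∫_Ω σ̂(x, q) φ(x) dx as n → ∞. -/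
/-!
Put `F x y = σ(x, y) e^{-2πi q·y} φ(x)`: it is continuous, `ℤ^d`-periodic in `y` and vanishes for
`x` outside the compact set `tsupport φ`. Translating `x` by `ε t` does not change
`∫ F(x, x/ε) dx` but shifts the fast variable by `t`; averaging over `t ∈ [0,1]^d` and using
periodicity replaces the fast variable by the mean `∫_{[0,1]^d} F(x, y) dy`. The price is
`sup_y |F(x + ε t, y) - F(x, y)|`, which tends to `0` uniformly because `F` descends to a compactly
supported continuous function on `ℝ^d × 𝕋^d`.
-/

open MeasureTheory Filter Topology Complex Set Function Metric

namespace UnitAddTorus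

variable {ι : Type*}

def mk (y : ι → ℝ) : UnitAddTorus ι := fun i => y i

lemma isOpenQuotientMap_mk : IsOpenQuotientMap (mk (ι := ι)) :=
  IsOpenQuotientMap.piMap fun _ => QuotientAddGroup.isOpenQuotientMap_mk

lemma mk_add (y y' : ι → ℝ) : mk (y + y') = mk y + mk y' := by
  ext i
  simp [mk]

lemma exists_int_of_mk_eq {y y' : ι → ℝ} (h : mk y = mk y') :
    ∃ k : ι → ℤ, y' = y + fun i => (k i : ℝ) := by
  have hi (i : ι) : ∃ n : ℤ, y' i = y i + n := by
    have : ((y' i - y i : ℝ) : UnitAddCircle) = 0 := by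
      rw [AddCircle.coe_sub, sub_eq_zero]
      exact (congrFun h i).symm
    obtain ⟨n, hn⟩ := (AddCircle.coe_eq_zero_iff 1).mp this
    exact ⟨n, by rw [zsmul_one] at hn; linarith⟩
  choose k hk using hi
  exact ⟨k, funext hk⟩

end UnitAddTorus

open UnitAddTorus

section Periodic

variable {ι E : Type*}

def IntPeriodic (g : (ι → ℝ) → E) : Prop :=
  ∀ y (k : ι → ℤ), g (y + fun i => (k i : ℝ)) = g y

noncomputable def torusLift (g : (ι → ℝ) → E) : UnitAddTorus ι → E :=
  g ∘ surjInv isOpenQuotientMap_mk.surjective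

lemma IntPeriodic.torusLift_mk {g : (ι → ℝ) → E} (hg : IntPeriodic g) (y : ι → ℝ) :
    torusLift g (mk y) = g y := by
  obtain ⟨k, hk⟩ := exists_int_of_mk_eq (surjInv_eq isOpenQuotientMap_mk.surjective (mk y)).symm
  rw [torusLift, comp_apply, hk, hg]

lemma continuous_torusLift_uncurry [TopologicalSpace E] {X : Type*} [TopologicalSpace X]
    {F : X → (ι → ℝ) → E} (hF : Continuous (uncurry F)) (hper : ∀ x, IntPeriodic (F x)) :
    Continuous fun p : X × UnitAddTorus ι => torusLift (F p.1) p.2 := by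
  rw [← (IsOpenQuotientMap.id.prodMap isOpenQuotientMap_mk).continuous_comp_iff]
  convert hF using 1
  ext ⟨x, y⟩
  exact (hper x).torusLift_mk y

variable [Fintype ι] [NormedAddCommGroup E]

lemma uniformEquicontinuous_of_intPeriodic {X : Type*} [PseudoMetricSpace X]
    {F : X → (ι → ℝ) → E} (hF : Continuous (uncurry F)) (hper : ∀ x, IntPeriodic (F x))
    {K : Set X} (hK : IsCompact K) (hFK : ∀ x ∉ K, F x = 0) :
    UniformEquicontinuous fun y x => F x y := by
  set G := fun p : X × UnitAddTorus ι => torusLift (F p.1) p.2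
  have hGK : HasCompactSupport G := by
    refine HasCompactSupport.intro (hK.prod isCompact_univ) fun ⟨x, z⟩ hxz => ?_
    obtain ⟨y, rfl⟩ := isOpenQuotientMap_mk.surjective z
    simp only [G, (hper x).torusLift_mk, hFK x (fun hx => hxz ⟨hx, mem_univ _⟩), Pi.zero_apply]
  have hG := hGK.uniformContinuous_of_continuous (continuous_torusLift_uncurry hF hper)
  rw [Metric.uniformEquicontinuous_iff]
  intro η hη
  obtain ⟨δ, hδ, h⟩ := (Metric.uniformContinuous_iff (α := X × UnitAddTorus ι)).mp hG η hη
  refine ⟨δ, hδ, fun x x' hxx' y => ?_⟩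
  simpa [G, (hper _).torusLift_mk] using
    @h (x, mk y) (x', mk y) (by simpa [Prod.dist_eq] using hxx')

variable [NormedSpace ℝ E]

-- The torus measure is the one of `UnitAddTorus.integral_preimage`, not the global `volume`.
lemma IntPeriodic.setIntegral_Icc_eq_integral_torusLift {g : (ι → ℝ) → E} (hg : IntPeriodic g) :
    ∫ y in Icc 0 1, g y = ∫ z, torusLift g z ∂(Measure.pi fun _ => AddCircle.haarAddCircle) := by
  have hae : {y : ι → ℝ | ∀ i, y i ∈ Ioc 0 1} =ᵐ[volume] Icc 0 1 := by
    have hset : {y : ι → ℝ | ∀ i, y i ∈ Ioc 0 1} = univ.pi fun _ => Ioc 0 1 := by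
      ext
      simp
    rw [hset, volume_pi]
    exact Measure.univ_pi_Ioc_ae_eq_Icc
  rw [← setIntegral_congr_set hae]
  refine Eq.trans ?_ (UnitAddTorus.integral_preimage _ 0).symm
  simp only [Pi.zero_apply, zero_add]
  exact integral_congr_ae (ae_of_all _ fun y => (hg.torusLift_mk y).symm)

lemma IntPeriodic.setIntegral_Icc_add {g : (ι → ℝ) → E} (hg : IntPeriodic g) (s : ι → ℝ) :
    ∫ y in Icc 0 1, g (s + y) = ∫ y in Icc 0 1, g y := by
  have hgs : IntPeriodic fun y => g (s + y) := fun y k => by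
    simp only [← add_assoc, hg (s + y) k]
  rw [hg.setIntegral_Icc_eq_integral_torusLift, hgs.setIntegral_Icc_eq_integral_torusLift,
    ← integral_add_left_eq_self (torusLift g) (mk s)]
  congr 1
  ext z
  obtain ⟨y, rfl⟩ := isOpenQuotientMap_mk.surjective z
  rw [hgs.torusLift_mk, ← mk_add, hg.torusLift_mk]

end Periodic

section Oscillation

variable {ι E : Type*} [Fintype ι] [NormedAddCommGroup E]
  {F : (ι → ℝ) → (ι → ℝ) → E} {K : Set (ι → ℝ)}

lemma integrable_comp_of_forall_notMem_eq_zero (hF : Continuous (uncurry F)) (hK : IsCompact K)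
    (hFK : ∀ x ∉ K, F x = 0) {w : (ι → ℝ) → ι → ℝ} (hw : Continuous w) :
    Integrable fun x => F x (w x) :=
  (hF.comp (continuous_id.prodMk hw)).integrable_of_hasCompactSupport
    (HasCompactSupport.intro hK fun x hx => by simp [hFK x hx])

lemma integrable_prod_restrict_of_forall_notMem_eq_zero (hF : Continuous (uncurry F))
    (hK : IsCompact K) (hFK : ∀ x ∉ K, F x = 0) {s : Set (ι → ℝ)} (hs : IsCompact s) :
    Integrable (uncurry F) (volume.prod (volume.restrict s)) := by
  have h : IntegrableOn (uncurry F) (K ×ˢ s) (volume.prod volume) :=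
    hF.continuousOn.integrableOn_compact (hK.prod hs)
  have h' := h.of_forall_sdiff_eq_zero (MeasurableSet.univ.prod hs.measurableSet)
    fun p hp => by simp [uncurry, hFK p.1 fun h1 => hp.2 ⟨h1, hp.1.2⟩]
  rwa [IntegrableOn, ← Measure.prod_restrict, Measure.restrict_univ] at h'

lemma integrable_prod_comp_add (hF : Continuous (uncurry F)) (hK : IsCompact K)
    (hFK : ∀ x ∉ K, F x = 0) {s : (ι → ℝ) → ι → ℝ} (hs : Continuous s) :
    Integrable (uncurry fun x t => F x (s x + t)) (volume.prod (volume.restrict (Icc 0 1))) :=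
  integrable_prod_restrict_of_forall_notMem_eq_zero (F := fun x t => F x (s x + t))
    (hF.comp (f := fun p : (ι → ℝ) × (ι → ℝ) => (p.1, s p.1 + p.2)) (by fun_prop))
    hK (fun x hx => funext fun t => by simp [hFK x hx]) isCompact_Icc

variable [NormedSpace ℝ E]

lemma norm_integral_translate_sub_le (hF : Continuous (uncurry F)) (hK : IsCompact K)
    (hFK : ∀ x ∉ K, F x = 0) {w : (ι → ℝ) → ι → ℝ} (hw : Continuous w) {η δ : ℝ}
    (hδ : ∀ x x', dist x x' < δ → ∀ y, dist (F x y) (F x' y) < η) {v : ι → ℝ}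
    (hvδ : ‖v‖ < δ) (hv1 : ‖v‖ ≤ 1) :
    ‖(∫ x, F (x + v) (w x)) - ∫ x, F x (w x)‖ ≤ η * volume.real (cthickening 1 K) := by
  have hFv : Continuous (uncurry fun x => F (x + v)) :=
    hF.comp ((continuous_fst.add continuous_const).prodMk continuous_snd)
  have hKv : ∀ x ∉ (· - v) '' K, F (x + v) = 0 := fun x hx =>
    hFK _ fun h => hx ⟨x + v, h, add_sub_cancel_right x v⟩
  rw [← integral_sub (integrable_comp_of_forall_notMem_eq_zero hFv
    (hK.image (continuous_sub_right v)) hKv hw)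
    (integrable_comp_of_forall_notMem_eq_zero hF hK hFK hw)]
  have hL := hK.cthickening (r := 1)
  refine (norm_integral_le_of_norm_le ((integrable_indicator_iff hL.measurableSet).mpr
    (integrableOn_const hL.measure_lt_top.ne)) (ae_of_all _ fun x => ?_)).trans_eq
    (by rw [integral_indicator_const _ hL.measurableSet, smul_eq_mul, mul_comm])
  by_cases hx : x ∈ cthickening 1 K
  · rw [indicator_of_mem hx, ← dist_eq_norm]
    exact (hδ _ _ (by rwa [dist_eq_norm, add_sub_cancel_left]) _).le
  · have h1 : x ∉ K := fun h => hx (self_subset_cthickening K h)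
    have h2 : x + v ∉ K := fun h => hx (mem_cthickening_of_dist_le x (x + v) 1 K h
      (by rwa [dist_eq_norm, sub_add_cancel_left, norm_neg]))
    simp [hFK _ h1, hFK _ h2, hx]

lemma integral_setIntegral_Icc_eq_setIntegral_integral_add (hF : Continuous (uncurry F))
    (hper : ∀ x, IntPeriodic (F x)) (hK : IsCompact K) (hFK : ∀ x ∉ K, F x = 0)
    {s : (ι → ℝ) → ι → ℝ} (hs : Continuous s) :
    ∫ x, ∫ y in Icc 0 1, F x y = ∫ t in Icc 0 1, ∫ x, F x (s x + t) := by
  calc ∫ x, ∫ y in Icc 0 1, F x y = ∫ x, ∫ t in Icc 0 1, F x (s x + t) := by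
        congr 1
        ext x
        exact ((hper x).setIntegral_Icc_add (s x)).symm
    _ = ∫ t in Icc 0 1, ∫ x, F x (s x + t) :=
        integral_integral_swap (integrable_prod_comp_add hF hK hFK hs)

variable [CompleteSpace E]

lemma norm_integral_comp_smul_inv_sub_le (hF : Continuous (uncurry F))
    (hper : ∀ x, IntPeriodic (F x)) (hK : IsCompact K) (hFK : ∀ x ∉ K, F x = 0) {η δ : ℝ}
    (hδ : ∀ x x', dist x x' < δ → ∀ y, dist (F x y) (F x' y) < η) {ε : ℝ} (hε : 0 < ε)
    (hεδ : ε < δ) (hε1 : ε ≤ 1) :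
    ‖(∫ x, F x (ε⁻¹ • x)) - ∫ x, ∫ y in Icc 0 1, F x y‖ ≤ η * volume.real (cthickening 1 K) := by
  have hvol : volume.real (Icc (0 : ι → ℝ) 1) = 1 := by
    simp [measureReal_def, Real.volume_Icc_pi]
  have htranslate (t : ι → ℝ) :
      ∫ x, F x (ε⁻¹ • x) = ∫ x, F (x + ε • t) (ε⁻¹ • x + t) := by
    rw [← integral_add_right_eq_self (fun x => F x (ε⁻¹ • x)) (ε • t)]
    simp only [smul_add, smul_smul, inv_mul_cancel₀ hε.ne', one_smul]
  have hsmul : Continuous fun x : ι → ℝ => ε⁻¹ • x := continuous_const_smul _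
  have hint : IntegrableOn (fun t => ∫ x, F x (ε⁻¹ • x + t)) (Icc 0 1) :=
    (integrable_prod_comp_add hF hK hFK hsmul).integral_prod_right
  rw [integral_setIntegral_Icc_eq_setIntegral_integral_add hF hper hK hFK hsmul]
  calc ‖(∫ x, F x (ε⁻¹ • x)) - ∫ t in Icc 0 1, ∫ x, F x (ε⁻¹ • x + t)‖
      = ‖∫ t in Icc 0 1, ((∫ x, F x (ε⁻¹ • x)) - ∫ x, F x (ε⁻¹ • x + t))‖ := by
        have hA : IntegrableOn (fun _ => ∫ x, F x (ε⁻¹ • x)) (Icc (0 : ι → ℝ) 1) :=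
          integrableOn_const measure_Icc_lt_top.ne
        rw [integral_sub hA hint, setIntegral_const, hvol, one_smul]
    _ ≤ η * volume.real (cthickening 1 K) * volume.real (Icc (0 : ι → ℝ) 1) := by
        refine norm_setIntegral_le_of_norm_le_const measure_Icc_lt_top fun t ht => ?_
        have ht1 : ‖t‖ ≤ 1 := (pi_norm_le_iff_of_nonneg zero_le_one).mpr fun i => by
          rw [Real.norm_of_nonneg (ht.1 i)]
          exact ht.2 i
        have hεt : ‖ε • t‖ ≤ ε := by
          rw [norm_smul, Real.norm_of_nonneg hε.le]
          exact mul_le_of_le_one_right hε.le ht1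
        rw [htranslate t]
        exact norm_integral_translate_sub_le hF hK hFK (hsmul.add continuous_const) hδ
          (hεt.trans_lt hεδ) (hεt.trans hε1)
    _ = η * volume.real (cthickening 1 K) := by rw [hvol, mul_one]

theorem tendsto_integral_comp_smul_inv (hF : Continuous (uncurry F))
    (hper : ∀ x, IntPeriodic (F x)) (hK : IsCompact K) (hFK : ∀ x ∉ K, F x = 0) :
    Tendsto (fun ε : ℝ => ∫ x, F x (ε⁻¹ • x)) (𝓝[>] 0) (𝓝 (∫ x, ∫ y in Icc 0 1, F x y)) := by
  set C := volume.real (cthickening 1 K)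
  have hC : 0 ≤ C := measureReal_nonneg
  rw [Metric.tendsto_nhds]
  intro e he
  obtain ⟨δ, hδ, hFδ⟩ := Metric.uniformEquicontinuous_iff.mp
    (uniformEquicontinuous_of_intPeriodic hF hper hK hFK) (e / (C + 1)) (by positivity)
  filter_upwards [Ioo_mem_nhdsGT (lt_min hδ one_pos)] with ε ⟨hε, hεδ⟩
  rw [dist_eq_norm]
  refine (norm_integral_comp_smul_inv_sub_le hF hper hK hFK hFδ hε
    (hεδ.trans_le (min_le_left _ _)) (hεδ.le.trans (min_le_right _ _))).trans_lt ?_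
  rw [div_mul_eq_mul_div, div_lt_iff₀ (by positivity)]
  nlinarith

end Oscillation

lemma ContinuousOn.continuous_mul_of_tsupport_subset {X Y R : Type*} [TopologicalSpace X]
    [TopologicalSpace Y] [MulZeroClass R] [TopologicalSpace R] [ContinuousMul R] {f : X × Y → R}
    {U : Set X} (hf : ContinuousOn f (U ×ˢ univ)) (hU : IsOpen U) {φ : X → R} (hφ : Continuous φ)
    (hφU : tsupport φ ⊆ U) : Continuous fun p => f p * φ p.1 :=
  (hf.mul (hφ.comp continuous_fst).continuousOn).continuous_of_tsupport_subset (hU.prod isOpen_univ)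
    (tsupport_mul_subset_right.trans <| (tsupport_comp_subset_preimage φ continuous_fst).trans <| by
      rw [prod_univ]
      exact preimage_mono hφU)

lemma intPeriodic_cexp_sum {ι : Type*} [Fintype ι] (q : ι → ℤ) :
    IntPeriodic fun y : ι → ℝ => cexp (-(2 * Real.pi * I) * ∑ i, (q i : ℂ) * (y i : ℂ)) := by
  intro y k
  have hsum : ∑ i, (q i : ℂ) * ((y + fun i => (k i : ℝ)) i : ℂ)
      = ∑ i, (q i : ℂ) * (y i : ℂ) + ((∑ i, q i * k i : ℤ) : ℂ) := by
    push_cast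
    rw [← Finset.sum_add_distrib]
    simp [mul_add]
  have hone : cexp (-(2 * Real.pi * I) * ((∑ i, q i * k i : ℤ) : ℂ)) = 1 := by
    rw [← Complex.exp_int_mul_two_pi_mul_I (-∑ i, q i * k i)]
    push_cast
    ring_nf
  dsimp only
  rw [hsum, mul_add, Complex.exp_add, hone, mul_one]

theorem oscillatory_weak_limit_general {d : ℕ} (Ω : Set (Fin d → ℝ))
    (hΩ : IsOpen Ω)
    (σ : (Fin d → ℝ) → (Fin d → ℝ) → ℂ)
    (hσc : ContinuousOn (fun z : (Fin d → ℝ) × (Fin d → ℝ) => σ z.1 z.2) (Ω ×ˢ Set.univ))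
    (hσper : ∀ x y : Fin d → ℝ, ∀ k : Fin d → ℤ, σ x (y + fun i => (k i : ℝ)) = σ x y)
    (ε : ℕ → ℝ) (hε : ∀ n, 0 < ε n) (hε0 : Filter.Tendsto ε Filter.atTop (𝓝 0))
    (q : Fin d → ℤ) :
    ∀ φ : (Fin d → ℝ) → ℂ, Continuous φ → HasCompactSupport φ → tsupport φ ⊆ Ω →
      Filter.Tendsto
        (fun n => ∫ x in Ω,
          σ x ((ε n)⁻¹ • x) *
            Complex.exp (-(2 * Real.pi * Complex.I) * ∑ i, (q i : ℂ) * ((x i / ε n : ℝ) : ℂ)) *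
            φ x)
        Filter.atTop
        (𝓝 (∫ x in Ω,
          (∫ y in Set.univ.pi fun _ : Fin d => Set.Icc (0 : ℝ) 1,
            σ x y * Complex.exp (-(2 * Real.pi * Complex.I) * ∑ i, (q i : ℂ) * ((y i : ℝ) : ℂ))) *
            φ x)) := by
  intro φ hφ hφK hφΩ
  set χ : (Fin d → ℝ) → ℂ := fun y => cexp (-(2 * Real.pi * I) * ∑ i, (q i : ℂ) * (y i : ℂ))
  set F : (Fin d → ℝ) → (Fin d → ℝ) → ℂ := fun x y => σ x y * χ y * φ x
  have hφ0 (x : Fin d → ℝ) (hx : x ∉ tsupport φ) : φ x = 0 := image_eq_zero_of_notMem_tsupport hx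
  have hFK (x : Fin d → ℝ) (hx : x ∉ tsupport φ) : F x = 0 := funext fun y => by simp [F, hφ0 x hx]
  have hFper (x : Fin d → ℝ) : IntPeriodic (F x) := fun y k => by
    simp only [F, hσper, intPeriodic_cexp_sum q y k, χ]
  have hFc : Continuous (uncurry F) :=
    (hσc.mul (by fun_prop : Continuous fun z : (Fin d → ℝ) × (Fin d → ℝ) => χ z.2).continuousOn)
      |>.continuous_mul_of_tsupport_subset hΩ hφ hφΩ
  have hlim := (tendsto_integral_comp_smul_inv hFc hFper hφK hFK).comp
    (tendsto_nhdsWithin_iff.mpr ⟨hε0, Eventually.of_forall hε⟩)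
  have hrestrict {f : (Fin d → ℝ) → ℂ} : ∫ x in Ω, f x * φ x = ∫ x, f x * φ x :=
    setIntegral_eq_integral_of_forall_compl_eq_zero fun x hx => by
      rw [hφ0 x fun h => hx (hφΩ h), mul_zero]
  rw [hrestrict, Set.pi_univ_Icc]
  simp only [← integral_mul_const]
  refine hlim.congr fun n => ?_
  rw [hrestrict]
  simp [F, χ, div_eq_inv_mul]

/-- weak convergence of `σ(x, x/ε_n) e^{-2πi q·x/ε_n}` to the `q`-th Fourier
coefficient `σ̂(x, q)` of `σ` in its (periodic) second variable. -/
theorem oscillatory_weak_limit {d : ℕ} (Ω : Set (Fin d → ℝ))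
    (hΩ : IsOpen Ω) (hΩne : Ω.Nonempty)
    (σ : (Fin d → ℝ) → (Fin d → ℝ) → ℂ)
    (hσc : ContinuousOn (fun z : (Fin d → ℝ) × (Fin d → ℝ) => σ z.1 z.2) (Ω ×ˢ Set.univ))
    (hσper : ∀ x y : Fin d → ℝ, ∀ k : Fin d → ℤ, σ x (y + fun i => (k i : ℝ)) = σ x y)
    (ε : ℕ → ℝ) (hε : ∀ n, 0 < ε n) (hε0 : Filter.Tendsto ε Filter.atTop (𝓝 0))
    (q : Fin d → ℤ) :
    ∀ φ : (Fin d → ℝ) → ℂ, Continuous φ → HasCompactSupport φ → tsupport φ ⊆ Ω →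
      Filter.Tendsto
        (fun n => ∫ x in Ω,
          σ x ((ε n)⁻¹ • x) *
            Complex.exp (-(2 * Real.pi * Complex.I) * ∑ i, (q i : ℂ) * ((x i / ε n : ℝ) : ℂ)) *
            φ x)
        Filter.atTop
        (𝓝 (∫ x in Ω,
          (∫ y in Set.univ.pi fun _ : Fin d => Set.Icc (0 : ℝ) 1,
            σ x y * Complex.exp (-(2 * Real.pi * Complex.I) * ∑ i, (q i : ℂ) * ((y i : ℝ) : ℂ))) *
            φ x)) :=
  oscillatory_weak_limit_general Ω hΩ σ hσc hσper ε hε hε0 q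
end

section
/- Let Ω ⊆ ℝ^d and V ⊆ ℝ^d be nonempty open sets with V bounded, and let a : Ω × V → ℝ^d be continuous. For ω ∈ L^2(Ω × [0,1)^d × V; ℂ), define for q ∈ ℤ^d the partial Fourier coefficient ω̂(x, q, λ) = ∫_{[0,1)^d} ω(x, y, λ) e^{−2πi q·y} dy (defined for almost every (x,λ) ∈ Ω × V), and for ε > 0 and q ∈ ℤ^d \ {0} set W_ε(q) = {(x,λ) ∈ Ω × V : |a(x,λ)·(q/|q|)| < 2ε}. Assume that for every q ∈ ℤ^d \ {0}, either ω̂(·, q, ·) = 0 almost everywhere on Ω × V, or the set {(x,λ) ∈ Ω × V : a(x,λ)·q = 0} has Lebesgue measure zero. Then lim_{ε→0⁺} Σ_{q ∈ ℤ^d \ {0}} ∫_{W_ε(q)} |ω̂(x, q, λ)|² dx dλ = 0. -/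
open MeasureTheory Filter Topology Complex
open scoped ENNReal

/-- The `q`-th partial Fourier coefficient (in the middle, periodic, variable)
of `ω : Ω × [0,1)^d × V → ℂ`. -/
noncomputable def partialFourierCoeff {d : ℕ}
    (ω : (Fin d → ℝ) → (Fin d → ℝ) → (Fin d → ℝ) → ℂ) (q : Fin d → ℤ)
    (x lam : Fin d → ℝ) : ℂ :=
  ∫ y in Set.univ.pi fun _ : Fin d => Set.Ico (0 : ℝ) 1,
    ω x y lam * Complex.exp (-(2 * Real.pi * Complex.I) * ∑ i, (q i : ℂ) * ((y i : ℝ) : ℂ))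

/-!
Bessel's inequality on each fibre `{x} × [0,1)ᵈ × {λ}`, integrated over `Ω × V`, bounds the total
mass `∑_q ∫_{Ω × V} |ω̂(·,q,·)|²` by `‖ω‖²_{L²} < ∞`. For fixed `q ≠ 0` the open sets `W_ε(q)`
decrease, as `ε ↓ 0`, into the zero set of `a · q`, which carries no mass of `|ω̂(·,q,·)|²` by
hypothesis; so each term tends to `0` by continuity from above, and dominated convergence for the
sum over `q` concludes.
-/

open ComplexConjugate UnitAddTorus

theorem tsum_enorm_integral_mul_conj_sq_le {α ι : Type*} [MeasurableSpace α] [DecidableEq ι]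
    {μ : Measure α} {e : ι → α → ℂ} (he : ∀ i, MemLp (e i) 2 μ)
    (horth : ∀ i j, ∫ x, e j x * conj (e i x) ∂μ = if i = j then 1 else 0)
    {g : α → ℂ} (hg : AEStronglyMeasurable g μ) :
    ∑' i, ‖∫ x, g x * conj (e i x) ∂μ‖ₑ ^ 2 ≤ ∫⁻ x, ‖g x‖ₑ ^ 2 ∂μ := by
  have hnorm : eLpNorm g 2 μ ^ 2 = ∫⁻ x, ‖g x‖ₑ ^ 2 ∂μ := by
    have := eLpNorm_nnreal_pow_eq_lintegral (f := g) (μ := μ) (p := 2) two_ne_zero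
    norm_num at this
    exact_mod_cast this
  by_cases hfin : ∫⁻ x, ‖g x‖ₑ ^ 2 ∂μ = ∞
  · simp [hfin]
  have hgL2 : MemLp g 2 μ := ⟨hg, by
    rw [← hnorm] at hfin
    exact lt_top_iff_ne_top.2 fun h => hfin (by simp [h])⟩
  set v : ι → Lp ℂ 2 μ := fun i => (he i).toLp
  have hinner : ∀ i (f : α → ℂ) (hf : MemLp f 2 μ),
      inner ℂ (v i) (hf.toLp f) = ∫ x, f x * conj (e i x) ∂μ := by
    intro i f hf
    rw [L2.inner_def]
    refine integral_congr_ae ?_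
    filter_upwards [(he i).coeFn_toLp, hf.coeFn_toLp] with x hx hfx
    simp [v, hx, hfx]
  have hv : Orthonormal ℂ v :=
    orthonormal_iff_ite.2 fun i j => (hinner i _ (he j)).trans (horth i j)
  calc ∑' i, ‖∫ x, g x * conj (e i x) ∂μ‖ₑ ^ 2
      = ENNReal.ofReal (∑' i, ‖inner ℂ (v i) (hgL2.toLp g)‖ ^ 2) := by
        rw [ENNReal.ofReal_tsum_of_nonneg (fun _ => by positivity)
          (hv.inner_products_summable _)]
        simp [hinner, ENNReal.ofReal_pow, ofReal_norm]
    _ ≤ ENNReal.ofReal (‖hgL2.toLp g‖ ^ 2) :=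
        ENNReal.ofReal_le_ofReal (hv.tsum_inner_products_le _)
    _ = ∫⁻ x, ‖g x‖ₑ ^ 2 ∂μ := by
        rw [ENNReal.ofReal_pow (norm_nonneg _), ofReal_norm, Lp.enorm_def,
          eLpNorm_congr_ae hgL2.coeFn_toLp, hnorm]

theorem lintegral_lintegral_middle_eq_lintegral_prod {α β γ : Type*} [MeasurableSpace α]
    [MeasurableSpace β] [MeasurableSpace γ] {μ : Measure α} {ν : Measure β} {ρ : Measure γ}
    [SFinite ν] [SFinite ρ] {f : α × β × γ → ℝ≥0∞} (hf : Measurable f) :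
    ∫⁻ z, ∫⁻ y, f (z.1, y, z.2) ∂ν ∂μ.prod ρ = ∫⁻ w, f w ∂μ.prod (ν.prod ρ) := by
  have hmid : Measurable fun z : α × γ => ∫⁻ y, f (z.1, y, z.2) ∂ν :=
    Measurable.lintegral_prod_right' (f := fun p : (α × γ) × β => f (p.1.1, p.2, p.1.2))
      (hf.comp (by fun_prop))
  rw [lintegral_prod _ hmid.aemeasurable, lintegral_prod _ hf.aemeasurable]
  refine lintegral_congr fun x => ?_
  have hslice : Measurable fun p : β × γ => f (x, p) := hf.comp (by fun_prop)
  rw [lintegral_prod _ hslice.aemeasurable]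
  have hswap : Measurable fun p : γ × β => f (x, p.2, p.1) := hf.comp (by fun_prop)
  exact lintegral_lintegral_swap hswap.aemeasurable

-- A sum is an integral against counting measure for the discrete σ-algebra.
theorem tendsto_tsum_of_dominated_convergence_ennreal {ι β : Type*} {l : Filter β}
    [l.IsCountablyGenerated] {F : β → ι → ℝ≥0∞} {f bound : ι → ℝ≥0∞}
    (h_bound : ∀ᶠ b in l, ∀ i, F b i ≤ bound i) (h_fin : ∑' i, bound i ≠ ∞)
    (h_lim : ∀ i, Tendsto (F · i) l (𝓝 (f i))) :
    Tendsto (fun b => ∑' i, F b i) l (𝓝 (∑' i, f i)) := by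
  let _ : MeasurableSpace ι := ⊤
  have : MeasurableSingletonClass ι := ⟨fun _ => MeasurableSpace.measurableSet_top⟩
  simpa only [lintegral_count] using
    tendsto_lintegral_filter_of_dominated_convergence (μ := Measure.count) bound
      (.of_forall fun _ => measurable_from_top) (h_bound.mono fun _ h => .of_forall h)
      (by rwa [lintegral_count]) (.of_forall h_lim)

theorem tendsto_setLIntegral_nhdsGT_zero_biInter {α : Type*} [MeasurableSpace α]
    {μ : Measure α} [SFinite μ] {f : α → ℝ≥0∞} {s : ℝ → Set α}
    (hs : ∀ ε > 0, MeasurableSet (s ε)) (hmono : Monotone s)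
    (hfin : ∃ ε > 0, ∫⁻ x in s ε, f x ∂μ ≠ ∞) :
    Tendsto (fun ε => ∫⁻ x in s ε, f x ∂μ) (𝓝[>] 0) (𝓝 (∫⁻ x in ⋂ ε > 0, s ε, f x ∂μ)) := by
  simp_rw [← withDensity_apply' f] at hfin ⊢
  exact tendsto_measure_biInter_gt (fun ε hε => (hs ε hε).nullMeasurableSet)
    (fun _ _ _ hij => hmono hij) hfin

abbrev unitCube (d : ℕ) : Set (Fin d → ℝ) := Set.univ.pi fun _ => Set.Ico 0 1

-- The Fourier modes of `UnitAddTorus` read on `[0,1)ᵈ`, so that their orthonormality comes from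
-- `UnitAddTorus.orthonormal_mFourier`.
noncomputable def cubeFourier {d : ℕ} (q : Fin d → ℤ) (y : Fin d → ℝ) : ℂ :=
  mFourier q fun i => (y i : UnitAddCircle)

lemma continuous_cubeFourier {d : ℕ} (q : Fin d → ℤ) : Continuous (cubeFourier q) :=
  (mFourier q).continuous.comp (by fun_prop)

lemma conj_cubeFourier {d : ℕ} (q : Fin d → ℤ) (y : Fin d → ℝ) :
    conj (cubeFourier q y) =
      Complex.exp (-(2 * Real.pi * Complex.I) * ∑ i, (q i : ℂ) * ((y i : ℝ) : ℂ)) := by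
  rw [cubeFourier, ← mFourier_neg, mFourier, ContinuousMap.coe_mk, Finset.mul_sum,
    Complex.exp_sum]
  refine Finset.prod_congr rfl fun i _ => ?_
  rw [fourier_coe_apply]
  push_cast [Pi.neg_apply]
  congr 1
  ring

lemma integral_cubeFourier_mul_conj {d : ℕ} (p q : Fin d → ℤ) :
    ∫ y in unitCube d, cubeFourier q y * conj (cubeFourier p y) = if p = q then 1 else 0 := by
  -- `integral_preimage` integrates over `(0,1]ᵈ`, which differs from `[0,1)ᵈ` by a null set.
  have hIoc : {y : Fin d → ℝ | ∀ i, y i ∈ Set.Ioc ((0 : Fin d → ℝ) i) ((0 : Fin d → ℝ) i + 1)} =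
      Set.univ.pi fun i => Set.Ioc ((0 : Fin d → ℝ) i) ((1 : Fin d → ℝ) i) := by
    ext y
    simp
  have hcube : unitCube d =ᵐ[volume]
      {y : Fin d → ℝ | ∀ i, y i ∈ Set.Ioc ((0 : Fin d → ℝ) i) ((0 : Fin d → ℝ) i + 1)} := by
    rw [hIoc, volume_pi]
    exact Measure.univ_pi_Ico_ae_eq_Icc.trans Measure.univ_pi_Ioc_ae_eq_Icc.symm
  rw [setIntegral_congr_set hcube]
  refine (integral_preimage (fun t => mFourier q t * conj (mFourier p t)) 0).symm.trans ?_
  -- The finiteness of the torus measure is only a local instance in Mathlib, so we unfold the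
  -- `L²` inner product by `L2.inner_def` rather than `ContinuousMap.inner_toLp`.
  rw [← orthonormal_iff_ite.1 orthonormal_mFourier p q, L2.inner_def]
  refine integral_congr_ae ?_
  filter_upwards [coeFn_mFourierLp 2 p, coeFn_mFourierLp 2 q] with t hp hq
  rw [hp, hq, RCLike.inner_apply, mul_comm]

lemma memLp_cubeFourier {d : ℕ} (q : Fin d → ℤ) :
    MemLp (cubeFourier q) 2 (volume.restrict (unitCube d)) := by
  have : IsFiniteMeasure (volume.restrict (unitCube d)) :=
    isFiniteMeasure_restrict.2 (by simp [Real.volume_pi_Ico])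
  refine MemLp.of_bound (continuous_cubeFourier q).aestronglyMeasurable 1
    (.of_forall fun y => ?_)
  simpa [cubeFourier, mFourier_norm] using
    (mFourier q).norm_coe_le_norm fun i => (y i : UnitAddCircle)

lemma partialFourierCoeff_eq_integral_mul_conj {d : ℕ}
    (ω : (Fin d → ℝ) → (Fin d → ℝ) → (Fin d → ℝ) → ℂ) (q : Fin d → ℤ) (x lam : Fin d → ℝ) :
    partialFourierCoeff ω q x lam = ∫ y in unitCube d, ω x y lam * conj (cubeFourier q y) := by
  simp only [partialFourierCoeff, conj_cubeFourier]

section PartialFourierCoeff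

variable {d : ℕ} {ω : (Fin d → ℝ) → (Fin d → ℝ) → (Fin d → ℝ) → ℂ}

lemma measurable_partialFourierCoeff
    (hω : Measurable fun z : (Fin d → ℝ) × (Fin d → ℝ) × (Fin d → ℝ) => ω z.1 z.2.1 z.2.2)
    (q : Fin d → ℤ) :
    Measurable fun z : (Fin d → ℝ) × (Fin d → ℝ) => partialFourierCoeff ω q z.1 z.2 := by
  simp_rw [partialFourierCoeff_eq_integral_mul_conj]
  have hint : StronglyMeasurable fun p : ((Fin d → ℝ) × (Fin d → ℝ)) × (Fin d → ℝ) =>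
      ω p.1.1 p.2 p.1.2 * conj (cubeFourier q p.2) := by
    have hslice : Measurable fun p : ((Fin d → ℝ) × (Fin d → ℝ)) × (Fin d → ℝ) =>
        ω p.1.1 p.2 p.1.2 :=
      hω.comp (f := fun p : ((Fin d → ℝ) × (Fin d → ℝ)) × (Fin d → ℝ) => (p.1.1, p.2, p.1.2))
        (by fun_prop)
    refine (hslice.mul ?_).stronglyMeasurable
    exact (Complex.continuous_conj.comp (continuous_cubeFourier q)).measurable.comp
      measurable_snd
  exact hint.integral_prod_right'.measurable

lemma tsum_enorm_partialFourierCoeff_sq_le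
    (hω : Measurable fun z : (Fin d → ℝ) × (Fin d → ℝ) × (Fin d → ℝ) => ω z.1 z.2.1 z.2.2)
    (x lam : Fin d → ℝ) :
    ∑' q, ‖partialFourierCoeff ω q x lam‖ₑ ^ 2 ≤ ∫⁻ y in unitCube d, ‖ω x y lam‖ₑ ^ 2 := by
  simp_rw [partialFourierCoeff_eq_integral_mul_conj]
  exact tsum_enorm_integral_mul_conj_sq_le memLp_cubeFourier integral_cubeFourier_mul_conj
    (hω.comp (f := fun y => (x, y, lam)) (by fun_prop)).aestronglyMeasurable

lemma tsum_lintegral_enorm_partialFourierCoeff_sq_le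
    (hω : Measurable fun z : (Fin d → ℝ) × (Fin d → ℝ) × (Fin d → ℝ) => ω z.1 z.2.1 z.2.2)
    (Ω V : Set (Fin d → ℝ)) :
    ∑' q, ∫⁻ z in Ω ×ˢ V, ‖partialFourierCoeff ω q z.1 z.2‖ₑ ^ 2 ≤
      ∫⁻ z in Ω ×ˢ unitCube d ×ˢ V, ‖ω z.1 z.2.1 z.2.2‖ₑ ^ 2 := by
  rw [← lintegral_tsum fun q =>
    ((measurable_partialFourierCoeff hω q).enorm.pow_const 2).aemeasurable]
  calc ∫⁻ z in Ω ×ˢ V, ∑' q, ‖partialFourierCoeff ω q z.1 z.2‖ₑ ^ 2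
      ≤ ∫⁻ z in Ω ×ˢ V, ∫⁻ y in unitCube d, ‖ω z.1 y z.2‖ₑ ^ 2 :=
        lintegral_mono fun z => tsum_enorm_partialFourierCoeff_sq_le hω z.1 z.2
    _ = ∫⁻ z in Ω ×ˢ unitCube d ×ˢ V, ‖ω z.1 z.2.1 z.2.2‖ₑ ^ 2 := by
        rw [Measure.volume_eq_prod, ← Measure.prod_restrict, Measure.volume_eq_prod,
          Measure.volume_eq_prod, ← Measure.prod_restrict, ← Measure.prod_restrict]
        exact lintegral_lintegral_middle_eq_lintegral_prod (hω.enorm.pow_const 2)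

end PartialFourierCoeff

section NearCharacteristic

variable {d : ℕ} {Ω V : Set (Fin d → ℝ)} {a : (Fin d → ℝ) → (Fin d → ℝ) → Fin d → ℝ}

-- The set `W_ε(q)`.
def nearCharSet (Ω V : Set (Fin d → ℝ)) (a : (Fin d → ℝ) → (Fin d → ℝ) → Fin d → ℝ)
    (q : Fin d → ℤ) (ε : ℝ) : Set ((Fin d → ℝ) × (Fin d → ℝ)) :=
  {z | z ∈ Ω ×ˢ V ∧ |∑ i, a z.1 z.2 i * ((q i : ℝ) / Real.sqrt (∑ j, ((q j : ℝ)) ^ 2))| < 2 * ε}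

lemma nearCharSet_subset (q : Fin d → ℤ) (ε : ℝ) : nearCharSet Ω V a q ε ⊆ Ω ×ˢ V :=
  fun _ hz => hz.1

lemma monotone_nearCharSet (q : Fin d → ℤ) : Monotone (nearCharSet Ω V a q) :=
  fun _ _ hεδ _ hz => ⟨hz.1, hz.2.trans_le (by linarith)⟩

lemma isOpen_nearCharSet (hΩ : IsOpen Ω) (hV : IsOpen V)
    (ha : ContinuousOn (fun z : (Fin d → ℝ) × (Fin d → ℝ) => a z.1 z.2) (Ω ×ˢ V))
    (q : Fin d → ℤ) (ε : ℝ) : IsOpen (nearCharSet Ω V a q ε) := by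
  have hcont : ContinuousOn (fun z : (Fin d → ℝ) × (Fin d → ℝ) =>
      |∑ i, a z.1 z.2 i * ((q i : ℝ) / Real.sqrt (∑ j, ((q j : ℝ)) ^ 2))|) (Ω ×ˢ V) :=
    (continuousOn_finsetSum _ fun i _ =>
      ((continuous_apply i).comp_continuousOn ha).mul continuousOn_const).abs
  exact hcont.isOpen_inter_preimage (hΩ.prod hV) isOpen_Iio

lemma biInter_nearCharSet_subset {q : Fin d → ℤ} (hq : q ≠ 0) :
    ⋂ ε > 0, nearCharSet Ω V a q ε ⊆ {z | z ∈ Ω ×ˢ V ∧ ∑ i, a z.1 z.2 i * (q i : ℝ) = 0} := by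
  intro z hz
  simp only [Set.mem_iInter] at hz
  set c := ∑ i, a z.1 z.2 i * ((q i : ℝ) / Real.sqrt (∑ j, ((q j : ℝ)) ^ 2))
  have hc : c = 0 := by
    by_contra hc
    have := (hz (|c| / 2) (by positivity)).2
    linarith
  have hnorm : 0 < Real.sqrt (∑ j, ((q j : ℝ)) ^ 2) := by
    obtain ⟨i, hi⟩ := Function.ne_iff.1 hq
    exact Real.sqrt_pos.2 (Finset.sum_pos' (fun j _ => sq_nonneg _)
      ⟨i, Finset.mem_univ i, by have : (q i : ℝ) ≠ 0 := mod_cast hi; positivity⟩)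
  refine ⟨(hz 1 one_pos).1, ?_⟩
  simp_rw [c, ← mul_div_assoc, ← Finset.sum_div, div_eq_zero_iff, hnorm.ne', or_false] at hc
  exact hc

lemma tendsto_lintegral_nearCharSet (hΩ : IsOpen Ω) (hV : IsOpen V)
    (ha : ContinuousOn (fun z : (Fin d → ℝ) × (Fin d → ℝ) => a z.1 z.2) (Ω ×ˢ V))
    {g : (Fin d → ℝ) × (Fin d → ℝ) → ℂ} {q : Fin d → ℤ} (hq : q ≠ 0)
    (hfin : ∫⁻ z in Ω ×ˢ V, ‖g z‖ₑ ^ 2 ≠ ∞)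
    (hzero : g =ᵐ[volume.restrict (Ω ×ˢ V)] 0 ∨
      volume {z | z ∈ Ω ×ˢ V ∧ ∑ i, a z.1 z.2 i * (q i : ℝ) = 0} = 0) :
    Tendsto (fun ε => ∫⁻ z in nearCharSet Ω V a q ε, ‖g z‖ₑ ^ 2) (𝓝[>] 0) (𝓝 0) := by
  have hlim := tendsto_setLIntegral_nhdsGT_zero_biInter
    (fun ε _ => (isOpen_nearCharSet hΩ hV ha q ε).measurableSet) (monotone_nearCharSet q)
    ⟨1, one_pos, ne_top_of_le_ne_top hfin (lintegral_mono_set (nearCharSet_subset q 1))⟩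
  suffices hnull : ∫⁻ z in {z | z ∈ Ω ×ˢ V ∧ ∑ i, a z.1 z.2 i * (q i : ℝ) = 0},
      ‖g z‖ₑ ^ 2 = 0 by
    rwa [nonpos_iff_eq_zero.1 ((lintegral_mono_set (biInter_nearCharSet_subset hq)).trans
      hnull.le)] at hlim
  rcases hzero with hg | hZ
  · refine nonpos_iff_eq_zero.1 ((lintegral_mono_set fun z hz => hz.1).trans ?_)
    exact (lintegral_congr_ae (hg.mono fun z hz => by simp [hz])).trans_le lintegral_zero.le
  · rw [Measure.restrict_eq_zero.2 hZ, lintegral_zero_measure]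

end NearCharacteristic

theorem coeff_mass_near_characteristic_vanishes_general {d : ℕ}
    (Ω V : Set (Fin d → ℝ)) (hΩ : IsOpen Ω)
    (hV : IsOpen V)
    (a : (Fin d → ℝ) → (Fin d → ℝ) → Fin d → ℝ)
    (ha : ContinuousOn (fun z : (Fin d → ℝ) × (Fin d → ℝ) => a z.1 z.2) (Ω ×ˢ V))
    (ω : (Fin d → ℝ) → (Fin d → ℝ) → (Fin d → ℝ) → ℂ)
    (hmeas : Measurable
      (fun z : (Fin d → ℝ) × (Fin d → ℝ) × (Fin d → ℝ) => ω z.1 z.2.1 z.2.2))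
    (hL2 : (∫⁻ z in Ω ×ˢ (Set.univ.pi fun _ : Fin d => Set.Ico (0 : ℝ) 1) ×ˢ V,
        ((‖ω z.1 z.2.1 z.2.2‖₊ : ℝ≥0∞) ^ (2 : ℕ))) < ⊤)
    (hzero : ∀ q : Fin d → ℤ, q ≠ 0 →
      ((fun z : (Fin d → ℝ) × (Fin d → ℝ) => partialFourierCoeff ω q z.1 z.2)
          =ᵐ[volume.restrict (Ω ×ˢ V)] 0) ∨
        volume {z : (Fin d → ℝ) × (Fin d → ℝ) |
          z ∈ Ω ×ˢ V ∧ ∑ i, a z.1 z.2 i * (q i : ℝ) = 0} = 0) :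
    Filter.Tendsto
      (fun ε : ℝ => ∑' q : {q : Fin d → ℤ // q ≠ 0},
        ∫⁻ z in {z : (Fin d → ℝ) × (Fin d → ℝ) | z ∈ Ω ×ˢ V ∧
            |∑ i, a z.1 z.2 i * ((q.1 i : ℝ) / Real.sqrt (∑ j, ((q.1 j : ℝ)) ^ 2))| < 2 * ε},
          ((‖partialFourierCoeff ω q.1 z.1 z.2‖₊ : ℝ≥0∞) ^ (2 : ℕ)))
      (𝓝[>] (0 : ℝ)) (𝓝 (0 : ℝ≥0∞)) := by
  simp only [← enorm_eq_nnnorm] at hL2 ⊢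
  have hmass : ∑' q : {q : Fin d → ℤ // q ≠ 0},
      ∫⁻ z in Ω ×ˢ V, ‖partialFourierCoeff ω q z.1 z.2‖ₑ ^ 2 ≠ ∞ :=
    ((ENNReal.tsum_comp_le_tsum_of_injective Subtype.val_injective _).trans
      (tsum_lintegral_enorm_partialFourierCoeff_sq_le hmeas Ω V)).trans_lt hL2 |>.ne
  show Tendsto (fun ε => ∑' q : {q : Fin d → ℤ // q ≠ 0},
    ∫⁻ z in nearCharSet Ω V a q ε, ‖partialFourierCoeff ω q z.1 z.2‖ₑ ^ 2) (𝓝[>] 0) (𝓝 0)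
  have := tendsto_tsum_of_dominated_convergence_ennreal (l := 𝓝[>] (0 : ℝ))
    (F := fun ε (q : {q : Fin d → ℤ // q ≠ 0}) =>
      ∫⁻ z in nearCharSet Ω V a q ε, ‖partialFourierCoeff ω q z.1 z.2‖ₑ ^ 2) (f := fun _ => 0)
    (.of_forall fun ε q => lintegral_mono_set (nearCharSet_subset q.1 ε)) hmass
    fun q => tendsto_lintegral_nearCharSet hΩ hV ha q.2
      (ne_top_of_le_ne_top hmass (ENNReal.le_tsum q)) (hzero q q.2)
  simpa only [tsum_zero] using this

/-- if, for every `q ≠ 0`, either `ω̂(·,q,·)` vanishes a.e. or the zero set of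
`a·q` in `Ω × V` is Lebesgue-null, then the mass of the coefficients over the
near-characteristic sets `W_ε(q)` vanishes as `ε → 0⁺`. -/
theorem coeff_mass_near_characteristic_vanishes {d : ℕ}
    (Ω V : Set (Fin d → ℝ)) (hΩ : IsOpen Ω) (hΩne : Ω.Nonempty)
    (hV : IsOpen V) (hVne : V.Nonempty) (hVb : Bornology.IsBounded V)
    (a : (Fin d → ℝ) → (Fin d → ℝ) → Fin d → ℝ)
    (ha : ContinuousOn (fun z : (Fin d → ℝ) × (Fin d → ℝ) => a z.1 z.2) (Ω ×ˢ V))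
    (ω : (Fin d → ℝ) → (Fin d → ℝ) → (Fin d → ℝ) → ℂ)
    (hmeas : Measurable
      (fun z : (Fin d → ℝ) × (Fin d → ℝ) × (Fin d → ℝ) => ω z.1 z.2.1 z.2.2))
    (hL2 : (∫⁻ z in Ω ×ˢ (Set.univ.pi fun _ : Fin d => Set.Ico (0 : ℝ) 1) ×ˢ V,
        ((‖ω z.1 z.2.1 z.2.2‖₊ : ℝ≥0∞) ^ (2 : ℕ))) < ⊤)
    (hzero : ∀ q : Fin d → ℤ, q ≠ 0 →
      ((fun z : (Fin d → ℝ) × (Fin d → ℝ) => partialFourierCoeff ω q z.1 z.2)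
          =ᵐ[volume.restrict (Ω ×ˢ V)] 0) ∨
        volume {z : (Fin d → ℝ) × (Fin d → ℝ) |
          z ∈ Ω ×ˢ V ∧ ∑ i, a z.1 z.2 i * (q i : ℝ) = 0} = 0) :
    Filter.Tendsto
      (fun ε : ℝ => ∑' q : {q : Fin d → ℤ // q ≠ 0},
        ∫⁻ z in {z : (Fin d → ℝ) × (Fin d → ℝ) | z ∈ Ω ×ˢ V ∧
            |∑ i, a z.1 z.2 i * ((q.1 i : ℝ) / Real.sqrt (∑ j, ((q.1 j : ℝ)) ^ 2))| < 2 * ε},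
          ((‖partialFourierCoeff ω q.1 z.1 z.2‖₊ : ℝ≥0∞) ^ (2 : ℕ)))
      (𝓝[>] (0 : ℝ)) (𝓝 (0 : ℝ≥0∞)) :=
  coeff_mass_near_characteristic_vanishes_general Ω V hΩ hV a ha ω hmeas hL2 hzero
end
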